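/- (Lyapunov norms for strong nonuniform polynomial dichotomy) An evolution family T(t,τ) admits a strong nonuniform polynomial dichotomy (a nonuniform polynomial dichotomy together with ∥T(t,τ)∥ ≤ K(t/τ)^b τ^ε for t ≥ τ, some K, b > 0) if and only if it admits a polynomial dichotomy with respect to a family of norms ∥·∥_t satisfying both ∥x∥ ≤ ∥x∥_t ≤ Ct^ε∥x∥ and the polynomial bounded growth ∥T(t,s)x∥_t ≤ M(t/s)^a∥x∥_s for t ≥ s ≥ 1, for some constants C, M, a > 0 and ε ≥ 0. -/

import Mathlib

open Set

variable {X : Type*} [NormedAddCommGroup X] [NormedSpace ℝ X] [CompleteSpace X]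

/-- Evolution family on `[1,∞)`. -/
def IsEvolutionFamily (T : ℝ → ℝ → X →L[ℝ] X) : Prop :=
  (∀ t : ℝ, 1 ≤ t → T t t = ContinuousLinearMap.id ℝ X) ∧
  (∀ τ s t : ℝ, 1 ≤ τ → τ ≤ s → s ≤ t → (T t s).comp (T s τ) = T t τ) ∧
  ∀ τ : ℝ, 1 ≤ τ → ∀ x : X, ContinuousOn (fun s => T s τ x) (Ici τ)

/-- A family of norms `N t` equivalent to `∥·∥` with constants `C, ε`:
`∥x∥ ≤ ∥x∥_t ≤ C t^ε ∥x∥`. -/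
def IsNormFamily (N : ℝ → X → ℝ) (C ε : ℝ) : Prop :=
  (∀ t : ℝ, ∀ x y : X, N t (x + y) ≤ N t x + N t y) ∧
  (∀ t : ℝ, ∀ a : ℝ, ∀ x : X, N t (a • x) = |a| * N t x) ∧
  ∀ t : ℝ, ∀ x : X, 1 ≤ t → ‖x‖ ≤ N t x ∧ N t x ≤ C * t ^ ε * ‖x‖

/-- Polynomial dichotomy with respect to a family of norms `N t`: projections `P`
commuting with the dynamics, invertible on the kernels, contraction rate
`D(t/τ)^{-λ}` on `Im P(τ)` and expansion rate `D⁻¹(t/τ)^{λ}` on `Ker P(τ)`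
(the latter being the forward reformulation of
`∥T(t,τ)Q(τ)x∥_t ≤ D(τ/t)^{-λ}∥x∥_τ` for `t ≤ τ`). -/
def PolyDichotomyWrt (T : ℝ → ℝ → X →L[ℝ] X) (N : ℝ → X → ℝ) : Prop :=
  ∃ P : ℝ → X →L[ℝ] X, ∃ D lam : ℝ, 0 < D ∧ 0 < lam ∧
    (∀ t : ℝ, 1 ≤ t → (P t).comp (P t) = P t) ∧
    (∀ τ t : ℝ, 1 ≤ τ → τ ≤ t → (P t).comp (T t τ) = (T t τ).comp (P τ)) ∧
    (∀ τ t : ℝ, 1 ≤ τ → τ ≤ t →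
      Set.BijOn (⇑(T t τ)) {v : X | P τ v = 0} {v : X | P t v = 0}) ∧
    (∀ τ t : ℝ, 1 ≤ τ → τ ≤ t → ∀ x : X,
      N t (T t τ (P τ x)) ≤ D * (t / τ) ^ (-lam) * N τ x) ∧
    (∀ τ t : ℝ, 1 ≤ τ → τ ≤ t → ∀ v : X, P τ v = 0 →
      D⁻¹ * (t / τ) ^ lam * N τ v ≤ N t (T t τ v))

/-- Nonuniform polynomial dichotomy: `∥T(t,τ)P(τ)∥ ≤ D(t/τ)^{-λ}τ^ε` for `t ≥ τ` and
`∥T(t,τ)Q(τ)∥ ≤ D(τ/t)^{-λ}τ^ε` for `t ≤ τ` (here stated in the equivalent forward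
form `∥T(t,τ)v∥ ≥ D⁻¹(t/τ)^{λ}t^{-ε}∥v∥` for `v ∈ Ker P(τ)`, `t ≥ τ`). -/
def NonuniformPolyDichotomy (T : ℝ → ℝ → X →L[ℝ] X) : Prop :=
  ∃ P : ℝ → X →L[ℝ] X, ∃ D lam ε : ℝ, 0 < D ∧ 0 < lam ∧ 0 ≤ ε ∧
    (∀ t : ℝ, 1 ≤ t → (P t).comp (P t) = P t) ∧
    (∀ τ t : ℝ, 1 ≤ τ → τ ≤ t → (P t).comp (T t τ) = (T t τ).comp (P τ)) ∧
    (∀ τ t : ℝ, 1 ≤ τ → τ ≤ t →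
      Set.BijOn (⇑(T t τ)) {v : X | P τ v = 0} {v : X | P t v = 0}) ∧
    (∀ τ t : ℝ, 1 ≤ τ → τ ≤ t → ∀ x : X,
      ‖T t τ (P τ x)‖ ≤ D * (t / τ) ^ (-lam) * τ ^ ε * ‖x‖) ∧
    (∀ τ t : ℝ, 1 ≤ τ → τ ≤ t → ∀ v : X, P τ v = 0 →
      D⁻¹ * (t / τ) ^ lam * t ^ (-ε) * ‖v‖ ≤ ‖T t τ v‖)
/-- Strong nonuniform polynomial dichotomy: a nonuniform polynomial dichotomy together
with the growth bound `∥T(t,τ)∥ ≤ K(t/τ)^b τ^ε` for `t ≥ τ`. -/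
def StrongNonuniformPolyDichotomy (T : ℝ → ℝ → X →L[ℝ] X) : Prop :=
  NonuniformPolyDichotomy T ∧
    ∃ K b ε : ℝ, 0 < K ∧ 0 < b ∧ 0 ≤ ε ∧
      ∀ τ t : ℝ, 1 ≤ τ → τ ≤ t → ∀ x : X, ‖T t τ x‖ ≤ K * (t / τ) ^ b * τ ^ ε * ‖x‖

/-!
For the forward direction put `Q(τ) = 1 - P(τ)` and, for `s ≤ τ`, let `T(s,τ)Q(τ)` be the
inverse of `T(τ,s)` between the kernels of the projections. The Lyapunov norm is

    ‖x‖_τ = sup_{t ≥ τ} (t/τ)^λ ‖T(t,τ)P(τ)x‖ + sup_{1 ≤ s ≤ τ} (τ/s)^λ ‖T(s,τ)Q(τ)x‖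
            + sup_{t ≥ τ} (τ/t)^b ‖T(t,τ)Q(τ)x‖.

The dichotomy and growth bounds make each supremum at most a multiple of `τ^ε ‖x‖`, and the
terms at `t = τ`, `s = τ` give `‖x‖ ≤ ‖x‖_τ`. Along the flow the first supremum decays like
`(τ/t)^λ` and the third grows at most like `(t/τ)^b`. The second supremum at time `t` also
involves the times `s ∈ [τ, t]`, where it is controlled by the third supremum at time `τ`: this
costs the exponent `λ + b` in the bounded growth, and on the kernels the second and third
suprema together grow at least like `(t/τ)^(min λ b)`.

For the converse, `‖x‖ ≤ ‖x‖_t ≤ C t^ε ‖x‖` transfers every estimate for the norms `‖·‖_t`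
to `‖·‖` at the price of a factor `C τ^ε` or `C t^ε`.
-/

section WeightedSup

variable {ι E F : Type*} [AddCommGroup E] [Module ℝ E] [SeminormedAddCommGroup F]
  [NormedSpace ℝ F]

noncomputable def weightedSup (w : ι → ℝ) (L : ι → E →ₗ[ℝ] F) (x : E) : ℝ :=
  ⨆ i, w i * ‖L i x‖

variable {w : ι → ℝ} {L : ι → E →ₗ[ℝ] F}

theorem weightedSup_nonneg (hw : ∀ i, 0 ≤ w i) (x : E) : 0 ≤ weightedSup w L x :=
  Real.iSup_nonneg fun i => mul_nonneg (hw i) (norm_nonneg _)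

theorem le_weightedSup {x : E} (hx : BddAbove (range fun i => w i * ‖L i x‖)) (i : ι) :
    w i * ‖L i x‖ ≤ weightedSup w L x :=
  le_ciSup hx i

theorem weightedSup_le {x : E} {c : ℝ} (hc : 0 ≤ c) (h : ∀ i, w i * ‖L i x‖ ≤ c) :
    weightedSup w L x ≤ c :=
  Real.iSup_le h hc

theorem weightedSup_add_le (hw : ∀ i, 0 ≤ w i) {x y : E}
    (hx : BddAbove (range fun i => w i * ‖L i x‖))
    (hy : BddAbove (range fun i => w i * ‖L i y‖)) :
    weightedSup w L (x + y) ≤ weightedSup w L x + weightedSup w L y := by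
  refine weightedSup_le (add_nonneg (weightedSup_nonneg hw x) (weightedSup_nonneg hw y))
    fun i => ?_
  calc w i * ‖L i (x + y)‖ ≤ w i * ‖L i x‖ + w i * ‖L i y‖ := by
        rw [map_add, ← mul_add]
        exact mul_le_mul_of_nonneg_left (norm_add_le _ _) (hw i)
    _ ≤ weightedSup w L x + weightedSup w L y :=
        add_le_add (le_weightedSup hx i) (le_weightedSup hy i)

theorem weightedSup_smul (a : ℝ) (x : E) :
    weightedSup w L (a • x) = |a| * weightedSup w L x := by
  simp only [weightedSup, Real.mul_iSup_of_nonneg (abs_nonneg a), map_smul, norm_smul,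
    Real.norm_eq_abs, mul_left_comm]

end WeightedSup

section RatioPowers

variable {r s t τ e : ℝ}

theorem div_rpow_mul_div_rpow (hr : 0 < r) (hs : 0 ≤ s) (ht : 0 ≤ t) (e : ℝ) :
    (t / r) ^ e * (r / s) ^ e = (t / s) ^ e := by
  rw [← Real.mul_rpow (div_nonneg ht hr.le) (div_nonneg hr.le hs), div_mul_div_cancel₀ hr.ne']

theorem div_rpow_mul_div_rpow_self (hs : 0 < s) (ht : 0 < t) (e : ℝ) :
    (t / s) ^ e * (s / t) ^ e = 1 := by
  rw [div_rpow_mul_div_rpow hs ht.le ht.le, div_self ht.ne', Real.one_rpow]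

theorem div_rpow_neg (hs : 0 ≤ s) (ht : 0 ≤ t) (e : ℝ) : (t / s) ^ (-e) = (s / t) ^ e := by
  rw [Real.rpow_neg (div_nonneg ht hs), ← Real.inv_rpow (div_nonneg ht hs), inv_div]

theorem div_rpow_le_div_rpow_mul_div_rpow {lam b μ : ℝ} (hτ : 0 < τ) (hτr : τ ≤ r)
    (hrt : r ≤ t) (hμl : μ ≤ lam) (hμb : μ ≤ b) :
    (τ / r) ^ b ≤ (τ / t) ^ μ * (t / r) ^ lam := by
  have hr : 0 < r := hτ.trans_le hτr
  calc (τ / r) ^ b ≤ (τ / r) ^ μ :=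
        Real.rpow_le_rpow_of_exponent_ge (div_pos hτ hr) ((div_le_one hr).2 hτr) hμb
    _ = (τ / t) ^ μ * (t / r) ^ μ :=
        (div_rpow_mul_div_rpow (hr.trans_le hrt) hr.le hτ.le μ).symm
    _ ≤ (τ / t) ^ μ * (t / r) ^ lam :=
        mul_le_mul_of_nonneg_left (Real.rpow_le_rpow_of_exponent_le ((one_le_div hr).2 hrt) hμl)
          (Real.rpow_nonneg (div_nonneg hτ.le (hr.trans_le hrt).le) _)

end RatioPowers

section Splitting

variable {E : Type*} [NormedAddCommGroup E] [NormedSpace ℝ E]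
  (T : ℝ → ℝ → E →L[ℝ] E) (P : ℝ → E →L[ℝ] E)

structure IsInvariantSplitting : Prop where
  self_eq : ∀ t : ℝ, 1 ≤ t → T t t = ContinuousLinearMap.id ℝ E
  comp_eq : ∀ τ s t : ℝ, 1 ≤ τ → τ ≤ s → s ≤ t → (T t s).comp (T s τ) = T t τ
  proj_idem : ∀ t : ℝ, 1 ≤ t → (P t).comp (P t) = P t
  proj_comm : ∀ τ t : ℝ, 1 ≤ τ → τ ≤ t → (P t).comp (T t τ) = (T t τ).comp (P τ)
  bijOn_ker : ∀ τ t : ℝ, 1 ≤ τ → τ ≤ t →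
    BijOn (T t τ) {v : E | P τ v = 0} {v : E | P t v = 0}

/-- `R s τ` is the paper's `T(s,τ)Q(τ)` for `s ≤ τ`: the inverse of `T(τ,s)` between the
kernels, composed with `Q(τ) = 1 - P(τ)`. -/
def IsKerInverse (R : ℝ → ℝ → E →ₗ[ℝ] E) : Prop :=
  ∀ s τ : ℝ, 1 ≤ s → s ≤ τ → ∀ y : E, P s (R s τ y) = 0 ∧ T τ s (R s τ y) = y - P τ y

variable {T P}

namespace IsInvariantSplitting

variable (h : IsInvariantSplitting T P)
include h

theorem apply_self {t : ℝ} (ht : 1 ≤ t) (x : E) : T t t x = x := by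
  rw [h.self_eq t ht, ContinuousLinearMap.id_apply]

theorem apply_apply {τ s t : ℝ} (hτ : 1 ≤ τ) (hτs : τ ≤ s) (hst : s ≤ t) (x : E) :
    T t s (T s τ x) = T t τ x :=
  DFunLike.congr_fun (h.comp_eq τ s t hτ hτs hst) x

theorem proj_proj {t : ℝ} (ht : 1 ≤ t) (x : E) : P t (P t x) = P t x :=
  DFunLike.congr_fun (h.proj_idem t ht) x

theorem proj_apply {τ t : ℝ} (hτ : 1 ≤ τ) (hτt : τ ≤ t) (x : E) :
    P t (T t τ x) = T t τ (P τ x) :=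
  DFunLike.congr_fun (h.proj_comm τ t hτ hτt) x

theorem proj_sub_proj {t : ℝ} (ht : 1 ≤ t) (x : E) : P t (x - P t x) = 0 := by
  rw [map_sub, h.proj_proj ht, sub_self]

theorem apply_sub_proj {τ t : ℝ} (hτ : 1 ≤ τ) (hτt : τ ≤ t) (x : E) :
    T t τ (x - P τ x) = T t τ x - P t (T t τ x) := by
  rw [map_sub, h.proj_apply hτ hτt]

theorem exists_isKerInverse : ∃ R, IsKerInverse T P R := by
  have key : ∀ s τ : ℝ, ∃ L : E →ₗ[ℝ] E, 1 ≤ s → s ≤ τ →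
      ∀ y : E, P s (L y) = 0 ∧ T τ s (L y) = y - P τ y := by
    intro s τ
    by_cases hsτ : 1 ≤ s ∧ s ≤ τ
    · have hbij := h.bijOn_ker s τ hsτ.1 hsτ.2
      let restr : LinearMap.ker (P s : E →ₗ[ℝ] E) →ₗ[ℝ] LinearMap.ker (P τ : E →ₗ[ℝ] E) :=
        (T τ s : E →ₗ[ℝ] E).restrict fun v hv =>
          hbij.mapsTo (show v ∈ {v | P s v = 0} from hv)
      have hrestr : Function.Bijective restr := by
        refine ⟨fun v w hvw => Subtype.ext (hbij.injOn v.2 w.2 (congrArg Subtype.val hvw)),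
          fun y => ?_⟩
        obtain ⟨v, hv, hvy⟩ := hbij.surjOn y.2
        exact ⟨⟨v, hv⟩, Subtype.ext hvy⟩
      let inv := LinearEquiv.ofBijective restr hrestr
      let compl : E →ₗ[ℝ] LinearMap.ker (P τ : E →ₗ[ℝ] E) :=
        LinearMap.codRestrict _ (ContinuousLinearMap.id ℝ E - P τ : E →ₗ[ℝ] E)
          fun y => h.proj_sub_proj (hsτ.1.trans hsτ.2) y
      refine ⟨(LinearMap.ker (P s : E →ₗ[ℝ] E)).subtype ∘ₗ
        (inv.symm : _ →ₗ[ℝ] _) ∘ₗ compl, fun _ _ y => ?_⟩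
      exact ⟨(inv.symm (compl y)).2, congrArg Subtype.val (inv.apply_symm_apply (compl y))⟩
    · exact ⟨0, fun hs hsτ' => absurd ⟨hs, hsτ'⟩ hsτ⟩
  choose R hR using key
  exact ⟨R, hR⟩

end IsInvariantSplitting

namespace IsKerInverse

variable {R : ℝ → ℝ → E →ₗ[ℝ] E} (hR : IsKerInverse T P R) (h : IsInvariantSplitting T P)
include hR h

theorem eq_of_apply_eq {s t : ℝ} (hs : 1 ≤ s) (hst : s ≤ t) {w z : E} (hw : P s w = 0)
    (hwz : T t s w = z - P t z) : R s t z = w :=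
  (h.bijOn_ker s t hs hst).injOn (hR s t hs hst z).1 hw ((hR s t hs hst z).2.trans hwz.symm)

theorem apply_self {τ : ℝ} (hτ : 1 ≤ τ) (y : E) : R τ τ y = y - P τ y :=
  hR.eq_of_apply_eq h hτ le_rfl (h.proj_sub_proj hτ y) (h.apply_self hτ _)

theorem apply_map_of_le_left {s τ t : ℝ} (hs : 1 ≤ s) (hsτ : s ≤ τ) (hτt : τ ≤ t) (y : E) :
    R s t (T t τ y) = R s τ y := by
  refine hR.eq_of_apply_eq h hs (hsτ.trans hτt) (hR s τ hs hsτ y).1 ?_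
  rw [← h.apply_apply hs hsτ hτt, (hR s τ hs hsτ y).2, h.apply_sub_proj (hs.trans hsτ) hτt]

theorem apply_map_of_le_right {τ r t : ℝ} (hτ : 1 ≤ τ) (hτr : τ ≤ r) (hrt : r ≤ t) (y : E) :
    R r t (T t τ y) = T r τ (y - P τ y) := by
  refine hR.eq_of_apply_eq h (hτ.trans hτr) hrt ?_ ?_
  · rw [h.proj_apply hτ hτr, h.proj_sub_proj hτ, map_zero]
  · rw [h.apply_apply hτ hτr hrt, h.apply_sub_proj hτ (hτr.trans hrt)]

theorem apply_eq_zero {s t : ℝ} (hs : 1 ≤ s) (hst : s ≤ t) {z : E} (hz : P t z = z) :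
    R s t z = 0 :=
  hR.eq_of_apply_eq h hs hst (map_zero _) (by rw [hz, sub_self, map_zero])

end IsKerInverse

end Splitting

section LyapunovNorm

variable {E : Type*} [NormedAddCommGroup E] [NormedSpace ℝ E]
  (T : ℝ → ℝ → E →L[ℝ] E) (P : ℝ → E →L[ℝ] E) (R : ℝ → ℝ → E →ₗ[ℝ] E)

structure IsStrongDichotomy (D lam K b ε : ℝ) : Prop extends IsInvariantSplitting T P where
  D_pos : 0 < D
  lam_pos : 0 < lam
  K_pos : 0 < K
  b_pos : 0 < b
  ε_nonneg : 0 ≤ ε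
  stable_le : ∀ τ t : ℝ, 1 ≤ τ → τ ≤ t → ∀ x : E,
    (t / τ) ^ lam * ‖T t τ (P τ x)‖ ≤ D * τ ^ ε * ‖x‖
  unstable_ge : ∀ τ t : ℝ, 1 ≤ τ → τ ≤ t → ∀ v : E, P τ v = 0 →
    (t / τ) ^ lam * ‖v‖ ≤ D * t ^ ε * ‖T t τ v‖
  growth_le : ∀ τ t : ℝ, 1 ≤ τ → τ ≤ t → ∀ x : E,
    (τ / t) ^ b * ‖T t τ x‖ ≤ K * τ ^ ε * ‖x‖

noncomputable def stableSup (lam τ : ℝ) : E → ℝ :=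
  weightedSup (fun t : Ici τ => ((t : ℝ) / τ) ^ lam) fun t => ((T t τ).comp (P τ) : E →ₗ[ℝ] E)

noncomputable def backwardSup (lam τ : ℝ) : E → ℝ :=
  weightedSup (fun s : Icc 1 τ => (τ / s) ^ lam) fun s => R s τ

noncomputable def forwardSup (b τ : ℝ) : E → ℝ :=
  weightedSup (fun t : Ici τ => (τ / t) ^ b) fun t =>
    ((T t τ).comp (ContinuousLinearMap.id ℝ E - P τ) : E →ₗ[ℝ] E)

noncomputable def lyapunovNorm (lam b τ : ℝ) (x : E) : ℝ :=
  if 1 ≤ τ then stableSup T P lam τ x + backwardSup R lam τ x + forwardSup T P b τ x else ‖x‖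

variable {T P R} {D lam K b ε τ t : ℝ}

theorem stableSup_nonneg (hτ : 1 ≤ τ) (x : E) : 0 ≤ stableSup T P lam τ x :=
  weightedSup_nonneg (fun t => Real.rpow_nonneg
    (div_nonneg (by linarith [show τ ≤ t from t.2]) (by linarith)) _) x

theorem backwardSup_nonneg (x : E) : 0 ≤ backwardSup R lam τ x :=
  weightedSup_nonneg (fun s => Real.rpow_nonneg
    (div_nonneg (by linarith [s.2.1, s.2.2]) (by linarith [s.2.1])) _) x

theorem forwardSup_nonneg (hτ : 1 ≤ τ) (x : E) : 0 ≤ forwardSup T P b τ x :=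
  weightedSup_nonneg (fun t => Real.rpow_nonneg
    (div_nonneg (by linarith) (by linarith [show τ ≤ t from t.2])) _) x

theorem stableSup_le_of_forall {x : E} {c : ℝ} (hc : 0 ≤ c)
    (H : ∀ t, τ ≤ t → (t / τ) ^ lam * ‖T t τ (P τ x)‖ ≤ c) : stableSup T P lam τ x ≤ c :=
  weightedSup_le hc fun t => H t t.2

theorem backwardSup_le_of_forall {x : E} {c : ℝ} (hc : 0 ≤ c)
    (H : ∀ s, 1 ≤ s → s ≤ τ → (τ / s) ^ lam * ‖R s τ x‖ ≤ c) : backwardSup R lam τ x ≤ c :=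
  weightedSup_le hc fun s => H s s.2.1 s.2.2

theorem forwardSup_le_of_forall {x : E} {c : ℝ} (hc : 0 ≤ c)
    (H : ∀ t, τ ≤ t → (τ / t) ^ b * ‖T t τ (x - P τ x)‖ ≤ c) : forwardSup T P b τ x ≤ c :=
  weightedSup_le hc fun t => H t t.2

theorem stableSup_of_proj_eq_zero {v : E} (hv : P τ v = 0) : stableSup T P lam τ v = 0 := by
  simp [stableSup, weightedSup, hv]

theorem forwardSup_of_proj_eq_self {y : E} (hy : P τ y = y) : forwardSup T P b τ y = 0 := by
  simp [forwardSup, weightedSup, hy]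

theorem IsInvariantSplitting.stableSup_proj (h : IsInvariantSplitting T P) (hτ : 1 ≤ τ)
    (x : E) : stableSup T P lam τ (P τ x) = stableSup T P lam τ x := by
  simp [stableSup, weightedSup, h.proj_proj hτ]

theorem IsKerInverse.backwardSup_of_proj_eq_self (hR : IsKerInverse T P R)
    (h : IsInvariantSplitting T P) {y : E} (hy : P t y = y) : backwardSup R lam t y = 0 :=
  le_antisymm (backwardSup_le_of_forall le_rfl fun s hs hst => by
    rw [hR.apply_eq_zero h hs hst hy, norm_zero, mul_zero]) (backwardSup_nonneg y)

namespace IsStrongDichotomy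

variable (h : IsStrongDichotomy T P D lam K b ε)
include h

theorem div_rpow_mul_norm_kerInverse_le (hR : IsKerInverse T P R) {s : ℝ} (hs : 1 ≤ s)
    (hsτ : s ≤ τ) (x : E) : (τ / s) ^ lam * ‖R s τ x‖ ≤ D * τ ^ ε * ‖x - P τ x‖ := by
  simpa only [(hR s τ hs hsτ x).2] using h.unstable_ge s τ hs hsτ _ (hR s τ hs hsτ x).1

theorem bddAbove_stable (hτ : 1 ≤ τ) (x : E) :
    BddAbove (range fun t : Ici τ => ((t : ℝ) / τ) ^ lam * ‖T t τ (P τ x)‖) :=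
  ⟨D * τ ^ ε * ‖x‖, forall_mem_range.2 fun t => h.stable_le τ t hτ t.2 x⟩

theorem bddAbove_backward (hR : IsKerInverse T P R) (x : E) :
    BddAbove (range fun s : Icc 1 τ => (τ / s) ^ lam * ‖R s τ x‖) :=
  ⟨D * τ ^ ε * ‖x - P τ x‖, forall_mem_range.2 fun s =>
    h.div_rpow_mul_norm_kerInverse_le hR s.2.1 s.2.2 x⟩

theorem bddAbove_forward (hτ : 1 ≤ τ) (x : E) :
    BddAbove (range fun t : Ici τ => (τ / t) ^ b * ‖T t τ (x - P τ x)‖) :=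
  ⟨K * τ ^ ε * ‖x - P τ x‖, forall_mem_range.2 fun t => h.growth_le τ t hτ t.2 _⟩

theorem le_stableSup (hτ : 1 ≤ τ) (x : E) (ht : τ ≤ t) :
    (t / τ) ^ lam * ‖T t τ (P τ x)‖ ≤ stableSup T P lam τ x :=
  le_weightedSup (h.bddAbove_stable hτ x) ⟨t, ht⟩

theorem le_backwardSup (hR : IsKerInverse T P R) {s : ℝ} (hs : 1 ≤ s) (hsτ : s ≤ τ) (x : E) :
    (τ / s) ^ lam * ‖R s τ x‖ ≤ backwardSup R lam τ x :=
  le_weightedSup (h.bddAbove_backward hR x) ⟨s, hs, hsτ⟩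

theorem le_forwardSup (hτ : 1 ≤ τ) (x : E) (ht : τ ≤ t) :
    (τ / t) ^ b * ‖T t τ (x - P τ x)‖ ≤ forwardSup T P b τ x :=
  le_weightedSup (h.bddAbove_forward hτ x) ⟨t, ht⟩

theorem norm_proj_le_stableSup (hτ : 1 ≤ τ) (x : E) : ‖P τ x‖ ≤ stableSup T P lam τ x := by
  simpa [div_self (zero_lt_one.trans_le hτ).ne', h.apply_self hτ]
    using h.le_stableSup hτ x le_rfl

theorem norm_sub_proj_le_backwardSup (hR : IsKerInverse T P R) (hτ : 1 ≤ τ) (x : E) :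
    ‖x - P τ x‖ ≤ backwardSup R lam τ x := by
  simpa [div_self (zero_lt_one.trans_le hτ).ne', hR.apply_self h.toIsInvariantSplitting hτ]
    using h.le_backwardSup hR hτ le_rfl x

theorem norm_sub_proj_le_forwardSup (hτ : 1 ≤ τ) (x : E) :
    ‖x - P τ x‖ ≤ forwardSup T P b τ x := by
  simpa [div_self (zero_lt_one.trans_le hτ).ne', h.apply_self hτ]
    using h.le_forwardSup hτ x le_rfl

theorem stableSup_le (hτ : 1 ≤ τ) (x : E) : stableSup T P lam τ x ≤ D * τ ^ ε * ‖x‖ :=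
  stableSup_le_of_forall (by have := h.D_pos; positivity) fun t ht => h.stable_le τ t hτ ht x

theorem backwardSup_le (hR : IsKerInverse T P R) (hτ : 1 ≤ τ) (x : E) :
    backwardSup R lam τ x ≤ D * τ ^ ε * ‖x - P τ x‖ :=
  backwardSup_le_of_forall (by have := h.D_pos; positivity) fun _ hs hsτ =>
    h.div_rpow_mul_norm_kerInverse_le hR hs hsτ x

theorem forwardSup_le (hτ : 1 ≤ τ) (x : E) :
    forwardSup T P b τ x ≤ K * τ ^ ε * ‖x - P τ x‖ :=
  forwardSup_le_of_forall (by have := h.K_pos; positivity) fun t ht => h.growth_le τ t hτ ht _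

theorem stableSup_add_le (hτ : 1 ≤ τ) (x y : E) :
    stableSup T P lam τ (x + y) ≤ stableSup T P lam τ x + stableSup T P lam τ y :=
  weightedSup_add_le (fun t => Real.rpow_nonneg
    (div_nonneg (by linarith [show τ ≤ t from t.2]) (by linarith)) _)
    (h.bddAbove_stable hτ x) (h.bddAbove_stable hτ y)

theorem backwardSup_add_le (hR : IsKerInverse T P R) (x y : E) :
    backwardSup R lam τ (x + y) ≤ backwardSup R lam τ x + backwardSup R lam τ y :=
  weightedSup_add_le (fun s => Real.rpow_nonneg
    (div_nonneg (by linarith [s.2.1, s.2.2]) (by linarith [s.2.1])) _)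
    (h.bddAbove_backward hR x) (h.bddAbove_backward hR y)

theorem forwardSup_add_le (hτ : 1 ≤ τ) (x y : E) :
    forwardSup T P b τ (x + y) ≤ forwardSup T P b τ x + forwardSup T P b τ y :=
  weightedSup_add_le (fun t => Real.rpow_nonneg
    (div_nonneg (by linarith) (by linarith [show τ ≤ t from t.2])) _)
    (h.bddAbove_forward hτ x) (h.bddAbove_forward hτ y)

theorem stableSup_map_le (hτ : 1 ≤ τ) (hτt : τ ≤ t) (x : E) :
    stableSup T P lam t (T t τ x) ≤ (τ / t) ^ lam * stableSup T P lam τ x := by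
  have hτ0 : 0 < τ := zero_lt_one.trans_le hτ
  have hw : 0 ≤ (τ / t) ^ lam := Real.rpow_nonneg (div_nonneg hτ0.le (by linarith)) _
  refine stableSup_le_of_forall (mul_nonneg hw (stableSup_nonneg hτ x)) fun r htr => ?_
  calc (r / t) ^ lam * ‖T r t (P t (T t τ x))‖
      = (τ / t) ^ lam * ((r / τ) ^ lam * ‖T r τ (P τ x)‖) := by
        rw [h.proj_apply hτ hτt, h.apply_apply hτ hτt htr, ← mul_assoc,
          mul_comm ((τ / t) ^ lam), div_rpow_mul_div_rpow hτ0 (by linarith) (by linarith)]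
    _ ≤ (τ / t) ^ lam * stableSup T P lam τ x :=
        mul_le_mul_of_nonneg_left (h.le_stableSup hτ x (hτt.trans htr)) hw

theorem forwardSup_map_le (hτ : 1 ≤ τ) (hτt : τ ≤ t) (x : E) :
    forwardSup T P b t (T t τ x) ≤ (t / τ) ^ b * forwardSup T P b τ x := by
  have hτ0 : 0 < τ := zero_lt_one.trans_le hτ
  have hw : 0 ≤ (t / τ) ^ b := Real.rpow_nonneg (div_nonneg (by linarith) hτ0.le) _
  refine forwardSup_le_of_forall (mul_nonneg hw (forwardSup_nonneg hτ x)) fun r htr => ?_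
  calc (t / r) ^ b * ‖T r t (T t τ x - P t (T t τ x))‖
      = (t / τ) ^ b * ((τ / r) ^ b * ‖T r τ (x - P τ x)‖) := by
        rw [← h.apply_sub_proj hτ hτt, h.apply_apply hτ hτt htr, ← mul_assoc,
          div_rpow_mul_div_rpow hτ0 (by linarith) (by linarith)]
    _ ≤ (t / τ) ^ b * forwardSup T P b τ x :=
        mul_le_mul_of_nonneg_left (h.le_forwardSup hτ x (hτt.trans htr)) hw

theorem backwardSup_map_le (hR : IsKerInverse T P R) (hτ : 1 ≤ τ) (hτt : τ ≤ t) (x : E) :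
    backwardSup R lam t (T t τ x) ≤
      (t / τ) ^ (lam + b) * (backwardSup R lam τ x + forwardSup T P b τ x) := by
  have hτ0 : 0 < τ := zero_lt_one.trans_le hτ
  have hF : 1 ≤ t / τ := (one_le_div hτ0).2 hτt
  have hB := backwardSup_nonneg (R := R) (lam := lam) (τ := τ) x
  have hE := forwardSup_nonneg (T := T) (P := P) (b := b) hτ x
  refine backwardSup_le_of_forall (by positivity) fun s hs hst => ?_
  have hs0 : 0 < s := zero_lt_one.trans_le hs
  rcases le_total s τ with hsτ | hτs
  · calc (t / s) ^ lam * ‖R s t (T t τ x)‖ = (t / τ) ^ lam * ((τ / s) ^ lam * ‖R s τ x‖) := by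
          rw [hR.apply_map_of_le_left h.toIsInvariantSplitting hs hsτ hτt, ← mul_assoc,
            div_rpow_mul_div_rpow hτ0 hs0.le (by linarith)]
      _ ≤ (t / τ) ^ (lam + b) * (backwardSup R lam τ x + forwardSup T P b τ x) := by
          gcongr
          · linarith [h.b_pos]
          · linarith [h.le_backwardSup hR hs hsτ x]
  · calc (t / s) ^ lam * ‖R s t (T t τ x)‖
        = (t / s) ^ lam * (s / τ) ^ b * ((τ / s) ^ b * ‖T s τ (x - P τ x)‖) := by
          rw [hR.apply_map_of_le_right h.toIsInvariantSplitting hτ hτs hst,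
            mul_assoc _ ((s / τ) ^ b), ← mul_assoc ((s / τ) ^ b),
            div_rpow_mul_div_rpow_self hτ0 hs0, one_mul]
      _ ≤ (t / τ) ^ lam * (t / τ) ^ b * forwardSup T P b τ x := by
          have := h.lam_pos
          have := h.b_pos
          have : 0 < t := by linarith
          gcongr
          exact h.le_forwardSup hτ x hτs
      _ ≤ (t / τ) ^ (lam + b) * (backwardSup R lam τ x + forwardSup T P b τ x) := by
          rw [← Real.rpow_add (by linarith)]
          gcongr
          linarith

theorem backwardSup_le_map (hR : IsKerInverse T P R) (hτ : 1 ≤ τ) (hτt : τ ≤ t) (x : E) :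
    backwardSup R lam τ x ≤ (τ / t) ^ lam * backwardSup R lam t (T t τ x) := by
  have hτ0 : 0 < τ := zero_lt_one.trans_le hτ
  have hw : 0 ≤ (τ / t) ^ lam := Real.rpow_nonneg (div_nonneg hτ0.le (by linarith)) _
  refine backwardSup_le_of_forall (mul_nonneg hw (backwardSup_nonneg _)) fun s hs hsτ => ?_
  calc (τ / s) ^ lam * ‖R s τ x‖ = (τ / t) ^ lam * ((t / s) ^ lam * ‖R s t (T t τ x)‖) := by
        rw [hR.apply_map_of_le_left h.toIsInvariantSplitting hs hsτ hτt, ← mul_assoc,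
          div_rpow_mul_div_rpow (by linarith) (by linarith) hτ0.le]
    _ ≤ (τ / t) ^ lam * backwardSup R lam t (T t τ x) :=
        mul_le_mul_of_nonneg_left (h.le_backwardSup hR hs (hsτ.trans hτt) _) hw

theorem forwardSup_le_map_of_ker (hR : IsKerInverse T P R) (hτ : 1 ≤ τ) (hτt : τ ≤ t) {v : E}
    (hv : P τ v = 0) :
    forwardSup T P b τ v ≤ (τ / t) ^ min lam b *
      (backwardSup R lam t (T t τ v) + forwardSup T P b t (T t τ v)) := by
  have hτ0 : 0 < τ := zero_lt_one.trans_le hτ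
  have hw : 0 ≤ (τ / t) ^ min lam b := Real.rpow_nonneg (div_nonneg hτ0.le (by linarith)) _
  have hB := backwardSup_nonneg (R := R) (lam := lam) (τ := t) (T t τ v)
  have hE := forwardSup_nonneg (T := T) (P := P) (b := b) (hτ.trans hτt) (T t τ v)
  have hPv : P t (T t τ v) = 0 := by rw [h.proj_apply hτ hτt, hv, map_zero]
  refine forwardSup_le_of_forall (by positivity) fun r hτr => ?_
  rw [hv, sub_zero]
  rcases le_total t r with htr | hrt
  · calc (τ / r) ^ b * ‖T r τ v‖
        = (τ / t) ^ b * ((t / r) ^ b * ‖T r t (T t τ v - P t (T t τ v))‖) := by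
          rw [hPv, sub_zero, h.apply_apply hτ hτt htr, ← mul_assoc,
            div_rpow_mul_div_rpow (by linarith) (by linarith) hτ0.le]
      _ ≤ (τ / t) ^ min lam b *
            (backwardSup R lam t (T t τ v) + forwardSup T P b t (T t τ v)) := by
          refine mul_le_mul (Real.rpow_le_rpow_of_exponent_ge (div_pos hτ0 (by linarith))
            ((div_le_one (by linarith)).2 hτt) (min_le_right _ _)) ?_
            (mul_nonneg (Real.rpow_nonneg (div_nonneg (by linarith) (by linarith)) _)
              (norm_nonneg _)) hw
          linarith [h.le_forwardSup (hτ.trans hτt) (T t τ v) htr]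
  · calc (τ / r) ^ b * ‖T r τ v‖ ≤ (τ / t) ^ min lam b * ((t / r) ^ lam * ‖R r t (T t τ v)‖) := by
          rw [hR.apply_map_of_le_right h.toIsInvariantSplitting hτ hτr hrt, hv, sub_zero,
            ← mul_assoc]
          exact mul_le_mul_of_nonneg_right (div_rpow_le_div_rpow_mul_div_rpow hτ0 hτr hrt
            (min_le_left _ _) (min_le_right _ _)) (norm_nonneg _)
      _ ≤ (τ / t) ^ min lam b *
            (backwardSup R lam t (T t τ v) + forwardSup T P b t (T t τ v)) := by
          gcongr
          linarith [h.le_backwardSup hR (hτ.trans hτr) hrt (T t τ v)]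

end IsStrongDichotomy

theorem lyapunovNorm_of_one_le (hτ : 1 ≤ τ) (x : E) :
    lyapunovNorm T P R lam b τ x =
      stableSup T P lam τ x + backwardSup R lam τ x + forwardSup T P b τ x :=
  if_pos hτ

namespace IsStrongDichotomy

variable (h : IsStrongDichotomy T P D lam K b ε) (hR : IsKerInverse T P R)
include h hR

theorem norm_le_lyapunovNorm (hτ : 1 ≤ τ) (x : E) : ‖x‖ ≤ lyapunovNorm T P R lam b τ x := by
  rw [lyapunovNorm_of_one_le hτ]
  calc ‖x‖ ≤ ‖P τ x‖ + ‖x - P τ x‖ := norm_le_norm_add_norm_sub' x (P τ x)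
    _ ≤ stableSup T P lam τ x + backwardSup R lam τ x :=
        add_le_add (h.norm_proj_le_stableSup hτ x) (h.norm_sub_proj_le_backwardSup hR hτ x)
    _ ≤ _ := le_add_of_nonneg_right (forwardSup_nonneg hτ x)

theorem lyapunovNorm_nonneg (hτ : 1 ≤ τ) (x : E) : 0 ≤ lyapunovNorm T P R lam b τ x :=
  (norm_nonneg x).trans (h.norm_le_lyapunovNorm hR hτ x)

theorem lyapunovNorm_le (hτ : 1 ≤ τ) (x : E) :
    lyapunovNorm T P R lam b τ x ≤ (D + (D + K) * (1 + D)) * τ ^ (2 * ε) * ‖x‖ := by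
  have hD := h.D_pos
  have hK := h.K_pos
  have hx := norm_nonneg x
  set e := τ ^ ε
  have he : 1 ≤ e := Real.one_le_rpow hτ h.ε_nonneg
  have hA := h.stableSup_le hτ x
  have hP : ‖P τ x‖ ≤ D * e * ‖x‖ := (h.norm_proj_le_stableSup hτ x).trans hA
  have hQ : ‖x - P τ x‖ ≤ (1 + D) * e * ‖x‖ := by
    calc ‖x - P τ x‖ ≤ ‖x‖ + ‖P τ x‖ := norm_sub_le _ _
      _ ≤ (1 + D) * e * ‖x‖ := by nlinarith
  have hB := (h.backwardSup_le hR hτ x).trans (mul_le_mul_of_nonneg_left hQ (by positivity))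
  have hE := (h.forwardSup_le hτ x).trans (mul_le_mul_of_nonneg_left hQ (by positivity))
  have he2 : D * e * ‖x‖ ≤ D * (e * e) * ‖x‖ := by
    gcongr
    nlinarith
  rw [lyapunovNorm_of_one_le hτ, two_mul, Real.rpow_add (zero_lt_one.trans_le hτ)]
  nlinarith

theorem isNormFamily_lyapunovNorm :
    IsNormFamily (lyapunovNorm T P R lam b) (D + (D + K) * (1 + D)) (2 * ε) := by
  refine ⟨fun τ x y => ?_, fun τ a x => ?_,
    fun τ x hτ => ⟨h.norm_le_lyapunovNorm hR hτ x, h.lyapunovNorm_le hR hτ x⟩⟩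
  · by_cases hτ : 1 ≤ τ
    · simp only [lyapunovNorm_of_one_le hτ]
      linarith [h.stableSup_add_le hτ x y, h.backwardSup_add_le hR (τ := τ) x y,
        h.forwardSup_add_le hτ x y]
    · simp only [lyapunovNorm, if_neg hτ]
      exact norm_add_le x y
  · simp only [lyapunovNorm, weightedSup_smul, stableSup, backwardSup, forwardSup, norm_smul,
      Real.norm_eq_abs]
    split_ifs <;> ring

theorem lyapunovNorm_map_le (hτ : 1 ≤ τ) (hτt : τ ≤ t) (x : E) :
    lyapunovNorm T P R lam b t (T t τ x) ≤
      2 * (t / τ) ^ (lam + b) * lyapunovNorm T P R lam b τ x := by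
  have hτ0 : 0 < τ := zero_lt_one.trans_le hτ
  have hF : 1 ≤ t / τ := (one_le_div hτ0).2 hτt
  have hA := h.stableSup_map_le hτ hτt x
  have hB := h.backwardSup_map_le hR hτ hτt x
  have hE := h.forwardSup_map_le hτ hτt x
  have hA1 : (τ / t) ^ lam ≤ 1 := Real.rpow_le_one (div_nonneg hτ0.le (by linarith))
    ((div_le_one (by linarith)).2 hτt) h.lam_pos.le
  have hlb : 1 ≤ (t / τ) ^ (lam + b) := Real.one_le_rpow hF (by linarith [h.lam_pos, h.b_pos])
  have hb : (t / τ) ^ b ≤ (t / τ) ^ (lam + b) :=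
    Real.rpow_le_rpow_of_exponent_le hF (by linarith [h.lam_pos])
  have := stableSup_nonneg (T := T) (P := P) (lam := lam) hτ x
  have := backwardSup_nonneg (R := R) (lam := lam) (τ := τ) x
  have := forwardSup_nonneg (T := T) (P := P) (b := b) hτ x
  rw [lyapunovNorm_of_one_le (hτ.trans hτt), lyapunovNorm_of_one_le hτ]
  nlinarith

theorem lyapunovNorm_map_proj_le (hτ : 1 ≤ τ) (hτt : τ ≤ t) (x : E) :
    lyapunovNorm T P R lam b t (T t τ (P τ x)) ≤
      (τ / t) ^ lam * lyapunovNorm T P R lam b τ x := by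
  have hw : 0 ≤ (τ / t) ^ lam := Real.rpow_nonneg (div_nonneg (by linarith) (by linarith)) _
  have hy : P t (T t τ (P τ x)) = T t τ (P τ x) := by
    rw [h.proj_apply hτ hτt, h.proj_proj hτ]
  have hB := backwardSup_nonneg (R := R) (lam := lam) (τ := τ) x
  have hE := forwardSup_nonneg (T := T) (P := P) (b := b) hτ x
  rw [lyapunovNorm_of_one_le (hτ.trans hτt), lyapunovNorm_of_one_le hτ,
    hR.backwardSup_of_proj_eq_self h.toIsInvariantSplitting hy, forwardSup_of_proj_eq_self hy,
    add_zero, add_zero]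
  calc stableSup T P lam t (T t τ (P τ x)) ≤ (τ / t) ^ lam * stableSup T P lam τ (P τ x) :=
        h.stableSup_map_le hτ hτt _
    _ = (τ / t) ^ lam * stableSup T P lam τ x := by rw [h.stableSup_proj hτ]
    _ ≤ _ := mul_le_mul_of_nonneg_left (by linarith) hw

theorem lyapunovNorm_le_map_of_ker (hτ : 1 ≤ τ) (hτt : τ ≤ t) {v : E} (hv : P τ v = 0) :
    lyapunovNorm T P R lam b τ v ≤
      2 * (τ / t) ^ min lam b * lyapunovNorm T P R lam b t (T t τ v) := by
  have hτ0 : 0 < τ := zero_lt_one.trans_le hτ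
  have hμ : (τ / t) ^ lam ≤ (τ / t) ^ min lam b := Real.rpow_le_rpow_of_exponent_ge
    (div_pos hτ0 (by linarith)) ((div_le_one (by linarith)).2 hτt) (min_le_left _ _)
  have hw : 0 ≤ (τ / t) ^ min lam b := Real.rpow_nonneg (div_nonneg hτ0.le (by linarith)) _
  have hB := h.backwardSup_le_map hR hτ hτt v
  have hE := h.forwardSup_le_map_of_ker hR hτ hτt hv
  have hA' := stableSup_nonneg (T := T) (P := P) (lam := lam) (hτ.trans hτt) (T t τ v)
  have hB' := backwardSup_nonneg (R := R) (lam := lam) (τ := t) (T t τ v)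
  have hE' := forwardSup_nonneg (T := T) (P := P) (b := b) (hτ.trans hτt) (T t τ v)
  have := mul_le_mul_of_nonneg_right hμ hB'
  rw [lyapunovNorm_of_one_le hτ, lyapunovNorm_of_one_le (hτ.trans hτt),
    stableSup_of_proj_eq_zero hv, zero_add]
  nlinarith [mul_nonneg hw hA', mul_nonneg hw hB', mul_nonneg hw hE']

theorem polyDichotomyWrt_lyapunovNorm : PolyDichotomyWrt T (lyapunovNorm T P R lam b) := by
  refine ⟨P, 2, min lam b, two_pos, lt_min h.lam_pos h.b_pos, h.proj_idem, h.proj_comm,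
    h.bijOn_ker, fun τ t hτ hτt x => ?_, fun τ t hτ hτt v hv => ?_⟩
  all_goals have hτ0 : 0 < τ := zero_lt_one.trans_le hτ
  · have hμ : (τ / t) ^ lam ≤ (τ / t) ^ min lam b := Real.rpow_le_rpow_of_exponent_ge
      (div_pos hτ0 (by linarith)) ((div_le_one (by linarith)).2 hτt) (min_le_left _ _)
    have hw : 0 ≤ (τ / t) ^ lam := Real.rpow_nonneg (div_nonneg hτ0.le (by linarith)) _
    rw [div_rpow_neg hτ0.le (by linarith)]
    calc lyapunovNorm T P R lam b t (T t τ (P τ x))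
        ≤ (τ / t) ^ lam * lyapunovNorm T P R lam b τ x := h.lyapunovNorm_map_proj_le hR hτ hτt x
      _ ≤ 2 * (τ / t) ^ min lam b * lyapunovNorm T P R lam b τ x :=
        mul_le_mul_of_nonneg_right (by linarith) (h.lyapunovNorm_nonneg hR hτ x)
  · have hinv := div_rpow_mul_div_rpow_self hτ0 (hτ0.trans_le hτt) (min lam b)
    calc 2⁻¹ * (t / τ) ^ min lam b * lyapunovNorm T P R lam b τ v
        ≤ 2⁻¹ * (t / τ) ^ min lam b *
            (2 * (τ / t) ^ min lam b * lyapunovNorm T P R lam b t (T t τ v)) :=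
          mul_le_mul_of_nonneg_left (h.lyapunovNorm_le_map_of_ker hR hτ hτt hv)
            (mul_nonneg (by norm_num) (Real.rpow_nonneg (div_nonneg (by linarith) hτ0.le) _))
      _ = lyapunovNorm T P R lam b t (T t τ v) := by
          linear_combination lyapunovNorm T P R lam b t (T t τ v) * hinv

end IsStrongDichotomy

theorem IsStrongDichotomy.exists_lyapunovNorm (h : IsStrongDichotomy T P D lam K b ε) :
    ∃ N : ℝ → E → ℝ, ∃ C M a ε' : ℝ, 0 < C ∧ 0 < M ∧ 0 < a ∧ 0 ≤ ε' ∧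
      IsNormFamily N C ε' ∧
      (∀ s t : ℝ, 1 ≤ s → s ≤ t → ∀ x : E, N t (T t s x) ≤ M * (t / s) ^ a * N s x) ∧
      PolyDichotomyWrt T N := by
  obtain ⟨R, hR⟩ := h.exists_isKerInverse
  have := h.D_pos
  have := h.K_pos
  exact ⟨lyapunovNorm T P R lam b, D + (D + K) * (1 + D), 2, lam + b, 2 * ε, by positivity,
    two_pos, add_pos h.lam_pos h.b_pos, by linarith [h.ε_nonneg],
    h.isNormFamily_lyapunovNorm hR, fun s t hs hst x => h.lyapunovNorm_map_le hR hs hst x,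
    h.polyDichotomyWrt_lyapunovNorm hR⟩

end LyapunovNorm
section Equivalence

variable {E : Type*} [NormedAddCommGroup E] [NormedSpace ℝ E] {T : ℝ → ℝ → E →L[ℝ] E}

theorem StrongNonuniformPolyDichotomy.exists_isStrongDichotomy
    (h : StrongNonuniformPolyDichotomy T) (hT : IsEvolutionFamily T) :
    ∃ P D lam K b ε, IsStrongDichotomy T P D lam K b ε := by
  obtain ⟨⟨P, D, lam, ε₁, hD, hlam, hε₁, hPP, hPT, hbij, hS, hU⟩, K, b, ε₂, hK, hb, hε₂, hG⟩ := h
  refine ⟨P, D, lam, K, b, max ε₁ ε₂, ⟨⟨hT.1, hT.2.1, hPP, hPT, hbij⟩, hD, hlam, hK, hb,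
    le_max_of_le_left hε₁, fun τ t hτ hτt x => ?_, fun τ t hτ hτt v hv => ?_,
    fun τ t hτ hτt x => ?_⟩⟩
  all_goals
    have hτ0 : 0 < τ := zero_lt_one.trans_le hτ
    have ht0 : 0 < t := hτ0.trans_le hτt
  · calc (t / τ) ^ lam * ‖T t τ (P τ x)‖
        ≤ (t / τ) ^ lam * (D * (t / τ) ^ (-lam) * τ ^ ε₁ * ‖x‖) :=
          mul_le_mul_of_nonneg_left (hS τ t hτ hτt x) (by positivity)
      _ = D * τ ^ ε₁ * ‖x‖ := by
          rw [div_rpow_neg hτ0.le ht0.le]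
          linear_combination D * τ ^ ε₁ * ‖x‖ * div_rpow_mul_div_rpow_self hτ0 ht0 lam
      _ ≤ D * τ ^ max ε₁ ε₂ * ‖x‖ := by
          gcongr
          exact le_max_left _ _
  · calc (t / τ) ^ lam * ‖v‖ = D * t ^ ε₁ * (D⁻¹ * (t / τ) ^ lam * t ^ (-ε₁) * ‖v‖) := by
          rw [Real.rpow_neg ht0.le]
          field_simp
      _ ≤ D * t ^ ε₁ * ‖T t τ v‖ :=
          mul_le_mul_of_nonneg_left (hU τ t hτ hτt v hv) (by positivity)
      _ ≤ D * t ^ max ε₁ ε₂ * ‖T t τ v‖ := by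
          gcongr
          exacts [hτ.trans hτt, le_max_left _ _]
  · calc (τ / t) ^ b * ‖T t τ x‖ ≤ (τ / t) ^ b * (K * (t / τ) ^ b * τ ^ ε₂ * ‖x‖) :=
          mul_le_mul_of_nonneg_left (hG τ t hτ hτt x) (by positivity)
      _ = K * τ ^ ε₂ * ‖x‖ := by
          linear_combination K * τ ^ ε₂ * ‖x‖ * div_rpow_mul_div_rpow_self ht0 hτ0 b
      _ ≤ K * τ ^ max ε₁ ε₂ * ‖x‖ := by
          gcongr
          exact le_max_right _ _

variable {N : ℝ → E → ℝ} {C ε : ℝ}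

theorem IsNormFamily.norm_le_of_le (hN : IsNormFamily N C ε) {τ t c r : ℝ} (hτ : 1 ≤ τ)
    (ht : 1 ≤ t) (hcr : 0 ≤ c * r) {x y : E} (hxy : N t y ≤ c * r * N τ x) :
    ‖y‖ ≤ c * C * r * τ ^ ε * ‖x‖ :=
  calc ‖y‖ ≤ N t y := (hN.2.2 t y ht).1
    _ ≤ c * r * N τ x := hxy
    _ ≤ c * r * (C * τ ^ ε * ‖x‖) := mul_le_mul_of_nonneg_left (hN.2.2 τ x hτ).2 hcr
    _ = c * C * r * τ ^ ε * ‖x‖ := by ring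

theorem IsNormFamily.le_norm_of_le (hN : IsNormFamily N C ε) {τ t c : ℝ} (hτ : 1 ≤ τ)
    (ht : 1 ≤ t) (hc : 0 ≤ c) {x y : E} (hxy : c * N τ x ≤ N t y) :
    c * ‖x‖ ≤ C * t ^ ε * ‖y‖ :=
  calc c * ‖x‖ ≤ c * N τ x := mul_le_mul_of_nonneg_left (hN.2.2 τ x hτ).1 hc
    _ ≤ N t y := hxy
    _ ≤ C * t ^ ε * ‖y‖ := (hN.2.2 t y ht).2

theorem PolyDichotomyWrt.nonuniformPolyDichotomy (hd : PolyDichotomyWrt T N)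
    (hN : IsNormFamily N C ε) (hC : 0 < C) (hε : 0 ≤ ε) : NonuniformPolyDichotomy T := by
  obtain ⟨P, D, lam, hD, hlam, hPP, hPT, hbij, hS, hU⟩ := hd
  refine ⟨P, D * C, lam, ε, mul_pos hD hC, hlam, hε, hPP, hPT, hbij,
    fun τ t hτ hτt x => ?_, fun τ t hτ hτt v hv => ?_⟩
  all_goals
    have hτ0 : 0 < τ := zero_lt_one.trans_le hτ
    have ht0 : 0 < t := hτ0.trans_le hτt
  · exact hN.norm_le_of_le hτ (hτ.trans hτt) (by positivity) (hS τ t hτ hτt x)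
  · have hv' := hN.le_norm_of_le hτ (hτ.trans hτt) (by positivity) (hU τ t hτ hτt v hv)
    calc (D * C)⁻¹ * (t / τ) ^ lam * t ^ (-ε) * ‖v‖
        = (C * t ^ ε)⁻¹ * (D⁻¹ * (t / τ) ^ lam * ‖v‖) := by
          rw [Real.rpow_neg ht0.le, mul_inv, mul_inv]
          ring
      _ ≤ (C * t ^ ε)⁻¹ * (C * t ^ ε * ‖T t τ v‖) :=
          mul_le_mul_of_nonneg_left hv' (by positivity)
      _ = ‖T t τ v‖ := inv_mul_cancel_left₀ (by positivity) _

end Equivalence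

/-- Proposition 2: an evolution family admits a strong nonuniform polynomial dichotomy
iff it admits a polynomial dichotomy with respect to a family of norms satisfying both
`∥x∥ ≤ ∥x∥_t ≤ Ct^ε∥x∥` and the polynomial bounded growth
`∥T(t,s)x∥_t ≤ M(t/s)^a∥x∥_s` for `t ≥ s ≥ 1`. -/
theorem stmt18 (T : ℝ → ℝ → X →L[ℝ] X) (hT : IsEvolutionFamily T) :
    StrongNonuniformPolyDichotomy T ↔
      ∃ N : ℝ → X → ℝ, ∃ C M a ε : ℝ, 0 < C ∧ 0 < M ∧ 0 < a ∧ 0 ≤ ε ∧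
        IsNormFamily N C ε ∧
        (∀ s t : ℝ, 1 ≤ s → s ≤ t → ∀ x : X, N t (T t s x) ≤ M * (t / s) ^ a * N s x) ∧
        PolyDichotomyWrt T N := by
  constructor
  · intro h
    obtain ⟨P, D, lam, K, b, ε, hP⟩ := h.exists_isStrongDichotomy hT
    exact hP.exists_lyapunovNorm
  · rintro ⟨N, C, M, a, ε, hC, hM, ha, hε, hN, hgrowth, hd⟩
    refine ⟨hd.nonuniformPolyDichotomy hN hC hε, M * C, a, ε, mul_pos hM hC, ha, hε,
      fun τ t hτ hτt x => hN.norm_le_of_le hτ (hτ.trans hτt) ?_ (hgrowth τ t hτ hτt x)⟩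
    have hτ0 : 0 < τ := zero_lt_one.trans_le hτ
    have ht0 : 0 < t := hτ0.trans_le hτt
    positivity
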